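/- Let C be a class of right R-modules containing R, and let T ∈ gen*(R) be an Ext-injective cogenerator for C: T ∈ C, Ext^{i≥1}_R(X,T) = 0 for all X ∈ C, and every M ∈ C fits in an exact sequence 0 → M → T' → M' → 0 with T' ∈ add(T) and M' ∈ C. Then T is a Wakamatsu tilting right R-module, i.e., T is self-orthogonal, T ∈ gen*(R), and R ∈ cogen*(T). -/
import Mathlib


noncomputable section
open CategoryTheory

universe u

/-- Vanishing of `Ext^i_A(M, N)` for `A`-modules `M`, `N`. -/
def extVanish (A : Type u) [Ring A] (i : ℕ) (M N : Type u) [AddCommGroup M] [Module A M]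
    [AddCommGroup N] [Module A N] : Prop :=
  Subsingleton
    (((Ext ℤ (ModuleCat.{u} A) i).obj (Opposite.op (ModuleCat.of A M))).obj (ModuleCat.of A N))

/-- `M` is a direct summand of a finite direct sum of copies of `T`, i.e. `M ∈ add T`. -/
def InAdd (A : Type u) [Ring A] (T : Type u) [AddCommGroup T] [Module A T]
    (M : Type u) [AddCommGroup M] [Module A M] : Prop :=
  ∃ (n : ℕ) (ι : M →ₗ[A] (Fin n → T)) (π : (Fin n → T) →ₗ[A] M), π ∘ₗ ι = LinearMap.id

/-- `X ∈ cogen*(T)`: there is an exact coresolution `0 → X → T⁰ → T¹ → ⋯` with each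
`Tⁱ ∈ add T` and `Ext¹(coker, T) = 0` at every stage. -/
def InCogenStar (A : Type u) [Ring A] (T : Type u) [AddCommGroup T] [Module A T]
    (X : Type u) [AddCommGroup X] [Module A X] : Prop :=
  ∃ (C : ℕ → ModuleCat.{u} A) (f : X →ₗ[A] C 0) (d : ∀ n, C n →ₗ[A] C (n + 1)),
    (∀ n, InAdd A T (C n)) ∧
    Function.Injective f ∧
    Function.Exact f (d 0) ∧
    (∀ n, Function.Exact (d n) (d (n + 1))) ∧
    extVanish A 1 ((C 0) ⧸ LinearMap.range f) T ∧
    (∀ n, extVanish A 1 ((C (n + 1)) ⧸ LinearMap.range (d n)) T)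

/-- `M ∈ gen*(T)`: there is an exact resolution `⋯ → T₁ → T₀ → M → 0` with each `Tᵢ ∈ add T`
and `Ext¹(T, ker fᵢ) = 0` for all `i`. -/
def InGenStar (A : Type u) [Ring A] (T : Type u) [AddCommGroup T] [Module A T]
    (M : Type u) [AddCommGroup M] [Module A M] : Prop :=
  ∃ (C : ℕ → ModuleCat.{u} A) (f : C 0 →ₗ[A] M) (d : ∀ n, C (n + 1) →ₗ[A] C n),
    (∀ n, InAdd A T (C n)) ∧
    Function.Surjective f ∧
    Function.Exact (d 0) f ∧
    (∀ n, Function.Exact (d (n + 1)) (d n)) ∧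
    extVanish A 1 T (LinearMap.ker f) ∧
    (∀ n, extVanish A 1 T (LinearMap.ker (d n)))

lemma extVanish_congr_left (A : Type u) [Ring A] (i : ℕ) {M M' N : Type u}
    [AddCommGroup M] [Module A M] [AddCommGroup M'] [Module A M']
    [AddCommGroup N] [Module A N] (e : M ≃ₗ[A] M') (h : extVanish A i M N) :
    extVanish A i M' N := by
  let iso : ((Ext ℤ (ModuleCat.{u} A) i).obj (Opposite.op (ModuleCat.of A M))).obj (ModuleCat.of A N)
      ≅ ((Ext ℤ (ModuleCat.{u} A) i).obj (Opposite.op (ModuleCat.of A M'))).obj (ModuleCat.of A N) :=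
    ((Ext ℤ (ModuleCat.{u} A) i).mapIso e.toModuleIso.op.symm).app (ModuleCat.of A N)
  have : Subsingleton ((forget (ModuleCat ℤ)).obj (((Ext ℤ (ModuleCat.{u} A) i).obj (Opposite.op (ModuleCat.of A M))).obj (ModuleCat.of A N))) := h
  exact (((forget (ModuleCat ℤ)).mapIso iso).toEquiv.symm).subsingleton

lemma exact_comp_inj {A : Type u} [Ring A] {B C D E : Type u}
    [AddCommGroup B] [Module A B] [AddCommGroup C] [Module A C]
    [AddCommGroup D] [Module A D] [AddCommGroup E] [Module A E]
    (f : B →ₗ[A] C) (g : C →ₗ[A] D) (h : D →ₗ[A] E)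
    (hfg : Function.Exact f g) (hh : Function.Injective h) :
    Function.Exact f (h ∘ₗ g) := by
  intro y
  rw [LinearMap.comp_apply, ← map_zero h, hh.eq_iff]
  exact hfg y

/-- Let `𝒞` be a class of right `R`-modules containing `R`, and let
`T ∈ gen*(R)` be an Ext-injective cogenerator for `𝒞`: `T ∈ 𝒞`, `Ext^{i≥1}_R(X,T) = 0` for
all `X ∈ 𝒞`, and every `M ∈ 𝒞` fits in an exact sequence `0 → M → T' → M' → 0` with
`T' ∈ add T` and `M' ∈ 𝒞`.  Then `T` is a Wakamatsu tilting right `R`-module: `T` is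
self-orthogonal, `T ∈ gen*(R)` and `R ∈ cogen*(T)`. -/
theorem wakamatsu_tilting_of_ext_injective_cogenerator (R : Type u) [Ring R]
    (𝒞 : ModuleCat.{u} Rᵐᵒᵖ → Prop)
    (hRC : 𝒞 (ModuleCat.of Rᵐᵒᵖ R))
    (T : Type u) [AddCommGroup T] [Module Rᵐᵒᵖ T]
    (hTgen : InGenStar Rᵐᵒᵖ R T)
    (hTC : 𝒞 (ModuleCat.of Rᵐᵒᵖ T))
    (hExtInj : ∀ X : ModuleCat.{u} Rᵐᵒᵖ, 𝒞 X → ∀ i : ℕ, 1 ≤ i → extVanish Rᵐᵒᵖ i X T)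
    (hCogen : ∀ M : ModuleCat.{u} Rᵐᵒᵖ, 𝒞 M →
      ∃ (T' M' : ModuleCat.{u} Rᵐᵒᵖ) (f : M →ₗ[Rᵐᵒᵖ] T') (g : T' →ₗ[Rᵐᵒᵖ] M'),
        InAdd Rᵐᵒᵖ T T' ∧ 𝒞 M' ∧
        Function.Injective f ∧ Function.Surjective g ∧ Function.Exact f g) :
    (∀ i : ℕ, 1 ≤ i → extVanish Rᵐᵒᵖ i T T) ∧
    InGenStar Rᵐᵒᵖ R T ∧
    InCogenStar Rᵐᵒᵖ T R := by
  classical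
  refine ⟨fun i hi => hExtInj (ModuleCat.of Rᵐᵒᵖ T) hTC i hi, hTgen, ?_⟩
  -- build the coresolution of R
  have step : ∀ (M : ModuleCat.{u} Rᵐᵒᵖ), 𝒞 M →
      Σ' (T' M' : ModuleCat.{u} Rᵐᵒᵖ) (f : M →ₗ[Rᵐᵒᵖ] T') (g : T' →ₗ[Rᵐᵒᵖ] M'),
        InAdd Rᵐᵒᵖ T T' ∧ 𝒞 M' ∧
        Function.Injective f ∧ Function.Surjective g ∧ Function.Exact f g := by
    intro M hM
    exact Classical.choice (by
      obtain ⟨T', M', f, g, h⟩ := hCogen M hM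
      exact ⟨⟨T', M', f, g, h⟩⟩)
  let seq : ℕ → Σ' M : ModuleCat.{u} Rᵐᵒᵖ, 𝒞 M := fun n =>
    Nat.rec ⟨ModuleCat.of Rᵐᵒᵖ R, hRC⟩
      (fun _ p => ⟨(step p.1 p.2).2.1, (step p.1 p.2).2.2.2.2.2.1⟩) n
  let Cm : ℕ → ModuleCat.{u} Rᵐᵒᵖ := fun n => (step (seq n).1 (seq n).2).1
  let fm : ∀ n, (seq n).1 →ₗ[Rᵐᵒᵖ] Cm n := fun n => (step (seq n).1 (seq n).2).2.2.1
  let gm : ∀ n, Cm n →ₗ[Rᵐᵒᵖ] (seq (n+1)).1 := fun n => (step (seq n).1 (seq n).2).2.2.2.1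
  have hadd : ∀ n, InAdd Rᵐᵒᵖ T (Cm n) := fun n => (step (seq n).1 (seq n).2).2.2.2.2.1
  have hinj : ∀ n, Function.Injective (fm n) := fun n => (step (seq n).1 (seq n).2).2.2.2.2.2.2.1
  have hsurj : ∀ n, Function.Surjective (gm n) :=
    fun n => (step (seq n).1 (seq n).2).2.2.2.2.2.2.2.1
  have hex : ∀ n, Function.Exact (fm n) (gm n) :=
    fun n => (step (seq n).1 (seq n).2).2.2.2.2.2.2.2.2
  have hker : ∀ n, LinearMap.ker (gm n) = LinearMap.range (fm n) :=
    fun n => LinearMap.exact_iff.mp (hex n)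
  let d : ∀ n, Cm n →ₗ[Rᵐᵒᵖ] Cm (n+1) := fun n => (fm (n+1)) ∘ₗ (gm n)
  have hrange : ∀ n, LinearMap.range (d n) = LinearMap.range (fm (n+1)) := by
    intro n
    show LinearMap.range ((fm (n+1)) ∘ₗ (gm n)) = _
    rw [LinearMap.range_comp, LinearMap.range_eq_top.mpr (hsurj n), Submodule.map_top]
  have quotEquiv : ∀ n, ((Cm n) ⧸ LinearMap.range (fm n)) ≃ₗ[Rᵐᵒᵖ] (seq (n+1)).1 := fun n =>
    (Submodule.quotEquivOfEq _ _ (hker n).symm).trans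
      ((gm n).quotKerEquivOfSurjective (hsurj n))
  refine ⟨Cm, fm 0, d, hadd, hinj 0, ?_, ?_, ?_, ?_⟩
  · exact exact_comp_inj (fm 0) (gm 0) (fm 1) (hex 0) (hinj 1)
  · intro n y
    constructor
    · intro hy
      have h1 : fm (n+2) (gm (n+1) y) = 0 := hy
      have h2 : gm (n+1) y = 0 := by
        apply hinj (n+2)
        rw [map_zero]
        exact h1
      obtain ⟨x, hx⟩ := (hex (n+1) y).mp h2
      obtain ⟨z, hz⟩ := hsurj n x
      refine ⟨z, ?_⟩
      show fm (n+1) (gm n z) = y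
      rw [hz, hx]
    · rintro ⟨z, rfl⟩
      show fm (n+2) (gm (n+1) (fm (n+1) (gm n z))) = 0
      rw [(hex (n+1) _).mpr ⟨gm n z, rfl⟩, map_zero]
  · exact extVanish_congr_left Rᵐᵒᵖ 1 (quotEquiv 0).symm
      (hExtInj (seq 1).1 (seq 1).2 1 le_rfl)
  · intro n
    have e : ((Cm (n+1)) ⧸ LinearMap.range (d n)) ≃ₗ[Rᵐᵒᵖ] (seq (n+2)).1 :=
      (Submodule.quotEquivOfEq _ _ (hrange n)).trans (quotEquiv (n+1))
    exact extVanish_congr_left Rᵐᵒᵖ 1 e.symm (hExtInj (seq (n+2)).1 (seq (n+2)).2 1 le_rfl)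


end
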